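/- Let χ : {1,…,n} → {ℓ,c,r} with χ⁻¹(c) ∩ {2,…,n−1} nonempty, and let l₁ be its least element. Then the map α₁' : IBNC(χ) → IBNC(χ₁) × IBNC(χ') defined by α₁'(π) = (π|_{[1,l₁]}, π|_{[l₁,n]}) is surjective: for every π₁ ∈ IBNC(χ₁) and π' ∈ IBNC(χ'), the partition of {1,…,n} obtained by keeping all blocks of π₁ and π' not containing l₁ and merging the block of π₁ containing l₁ with the block of π' containing l₁ belongs to IBNC(χ). -/

import Mathlib

namespace FFB

/-- The three letters ℓ, c, r labelling the faces. -/
inductive Letter : Type where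
  | l | c | r
deriving DecidableEq

/-- `x` is one of the letters `ℓ`, `c`. -/
def isLC (x : Letter) : Prop := x = Letter.l ∨ x = Letter.c

variable {α : Type*}

/-- The total order `≺_χ` on the index set determined by `χ`:
the elements of `χ⁻¹{ℓ,c}` in increasing order followed by the elements of
`χ⁻¹{r}` in decreasing order. -/
def chiLT [LT α] (χ : α → Letter) (i j : α) : Prop :=
  (isLC (χ i) ∧ isLC (χ j) ∧ i < j)
  ∨ (isLC (χ i) ∧ χ j = Letter.r)
  ∨ (χ i = Letter.r ∧ χ j = Letter.r ∧ j < i)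

/-- A partition (equivalence relation) `π` is `χ`-noncrossing if there is no quadruple
`s₁ ≺_χ r₁ ≺_χ s₂ ≺_χ r₂` with `s₁ ∼ s₂`, `r₁ ∼ r₂` lying in different blocks. -/
def ChiNoncrossing [LT α] (χ : α → Letter) (π : Setoid α) : Prop :=
  ∀ s₁ r₁ s₂ r₂ : α, chiLT χ s₁ r₁ → chiLT χ r₁ s₂ → chiLT χ s₂ r₂ →
    π s₁ s₂ → π r₁ r₂ → π s₁ r₁

/-- A partition `π` is `χ`-interval if whenever `i < j < k`, `i ∼ k` and `χ j = c`,
then `i, j, k` all lie in the same block. -/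
def ChiInterval [LT α] (χ : α → Letter) (π : Setoid α) : Prop :=
  ∀ i j k : α, i < j → j < k → χ j = Letter.c → π i k → π i j

/-- The set of interval-bi-noncrossing partitions with respect to `χ`. -/
def IBNC [LT α] (χ : α → Letter) : Set (Setoid α) :=
  {π | ChiNoncrossing χ π ∧ ChiInterval χ π}

/-- The set of `χ`-noncrossing partitions. -/
def NC [LT α] (χ : α → Letter) : Set (Setoid α) :=
  {π | ChiNoncrossing χ π}

/-- Restriction of a partition of `α` to a subset `V ⊆ α`. -/
def restrict (V : Set α) (σ : Setoid α) : Setoid V := Setoid.comap Subtype.val σ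

/-- Restriction of `χ` to a subset `V ⊆ α`. -/
def restChi (V : Set α) (χ : α → Letter) : V → Letter := fun x => χ x.1

/- `mu` is the Möbius function of the finite poset `P` (with the induced order):
it is the (two-sided) convolution inverse of the zeta function. -/
open Classical in
def IsMobius {β : Type*} [PartialOrder β] (P : Set β) (mu : β → β → ℂ) : Prop :=
  ∀ a ∈ P, ∀ b ∈ P, a ≤ b →
    ((∑ᶠ c ∈ {c | c ∈ P ∧ a ≤ c ∧ c ≤ b}, mu a c) = if a = b then 1 else 0) ∧
    ((∑ᶠ c ∈ {c | c ∈ P ∧ a ≤ c ∧ c ≤ b}, mu c b) = if a = b then 1 else 0)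

section Moments

variable {A : Type*} [Ring A] [LinearOrder α] [Finite α]

/-- `φ_V(z₁,…,zₙ) = φ(z_{l₁} ⋯ z_{l_k})` where `V = {l₁ < ⋯ < l_k}`. -/
noncomputable def phiV (φ : A → ℂ) (z : α → A) (V : Set α) : ℂ :=
  φ (((Set.toFinite V).toFinset.sort (· ≤ ·)).map z).prod

/-- `φ_σ(z₁,…,zₙ) = ∏_{V ∈ σ} φ_V(z₁,…,zₙ)`. -/
noncomputable def phiPart (φ : A → ℂ) (z : α → A) (σ : Setoid α) : ℂ :=
  ∏ᶠ q : Quotient σ, phiV φ z {y | Quotient.mk σ y = q}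

/-- The free-free-Boolean cumulant
`κ_{χ,π}(z₁,…,zₙ) = Σ_{σ ∈ IBNC(χ), σ ≤ π} μ_{IBNC(χ)}(σ,π) φ_σ(z₁,…,zₙ)`,
where `mu` is (a function which is) the Möbius function of `IBNC(χ)`. -/
noncomputable def cum (φ : A → ℂ) (χ : α → Letter)
    (mu : Setoid α → Setoid α → ℂ) (z : α → A) (π : Setoid α) : ℂ :=
  ∑ᶠ σ ∈ {σ | σ ∈ IBNC χ ∧ σ ≤ π}, mu σ π * phiPart φ z σ

end Moments

/-- Combinatorial free-free-Boolean independence: mixed cumulants vanish.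
`F i x` is the face of the `i`-th triple labelled by the letter `x`. -/
def CombFFB {A : Type*} [Ring A] [Algebra ℂ A] (φ : A →ₗ[ℂ] ℂ) {I : Type*}
    (F : I → Letter → NonUnitalSubalgebra ℂ A) : Prop :=
  ∀ (n : ℕ) (χ : Fin n → Letter) (ω : Fin n → I) (z : Fin n → A),
    (∀ k, z k ∈ F (ω k) (χ k)) → (¬ ∃ i, ∀ k, ω k = i) →
    ∀ mu : Setoid (Fin n) → Setoid (Fin n) → ℂ, IsMobius (IBNC χ) mu →
      cum (⇑φ) χ mu z ⊤ = 0

end FFB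

namespace FFB

/-- The partition of `{1,…,n}` obtained from a partition `π₁` of `[1,l₁]` and a partition
`π'` of `[l₁,n]` by keeping all blocks not containing `l₁` and merging the two blocks
containing `l₁` (described here as an equivalence relation). -/
def glue {n : ℕ} (l₁ : Fin n) (π₁ : Setoid (Set.Iic l₁)) (π' : Setoid (Set.Ici l₁))
    (x y : Fin n) : Prop :=
  (∃ hx : x ∈ Set.Iic l₁, ∃ hy : y ∈ Set.Iic l₁, π₁ ⟨x, hx⟩ ⟨y, hy⟩) ∨
  (∃ hx : x ∈ Set.Ici l₁, ∃ hy : y ∈ Set.Ici l₁, π' ⟨x, hx⟩ ⟨y, hy⟩) ∨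
  (∃ hx : x ∈ Set.Iic l₁, ∃ hy : y ∈ Set.Ici l₁,
     π₁ ⟨x, hx⟩ ⟨l₁, Set.self_mem_Iic⟩ ∧ π' ⟨l₁, Set.self_mem_Ici⟩ ⟨y, hy⟩) ∨
  (∃ hx : x ∈ Set.Ici l₁, ∃ hy : y ∈ Set.Iic l₁,
     π₁ ⟨y, hy⟩ ⟨l₁, Set.self_mem_Iic⟩ ∧ π' ⟨l₁, Set.self_mem_Ici⟩ ⟨x, hx⟩)

/-!
The glued partition is the meet of the pull-backs of `π₁` and `π'` along the retractions
`x ↦ min l₁ x` and `x ↦ max l₁ x` onto `[1, l₁]` and `[l₁, n]`. Both the `χ`-noncrossing and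
the `χ`-interval condition are stable under meets and pull back along weakly monotone maps
(for `≺_χ` and for `<` respectively). Since `χ l₁ = c`, the retraction onto `[1, l₁]` is weakly
`≺_χ`-monotone. So is the retraction onto `[l₁, n]`, except on the final `≺_χ`-segment of
`r`-points below `l₁`, which it sends to the `≺_χ`-least point `l₁`; a cyclic rotation of a
crossing quadruple reduces that case to the monotone one.
-/

variable {α β : Type*}

def chiLE [LT α] (χ : α → Letter) (a b : α) : Prop := a = b ∨ chiLT χ a b

section Stability

variable {χ : α → Letter}

theorem ChiNoncrossing.inf [LT α] {σ τ : Setoid α} (hσ : ChiNoncrossing χ σ)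
    (hτ : ChiNoncrossing χ τ) : ChiNoncrossing χ (σ ⊓ τ) :=
  fun s₁ r₁ s₂ r₂ h₁ h₂ h₃ hs hr =>
    ⟨hσ s₁ r₁ s₂ r₂ h₁ h₂ h₃ hs.1 hr.1, hτ s₁ r₁ s₂ r₂ h₁ h₂ h₃ hs.2 hr.2⟩

theorem ChiInterval.inf [LT α] {σ τ : Setoid α} (hσ : ChiInterval χ σ)
    (hτ : ChiInterval χ τ) : ChiInterval χ (σ ⊓ τ) :=
  fun i j k hij hjk hj hik => ⟨hσ i j k hij hjk hj hik.1, hτ i j k hij hjk hj hik.2⟩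

theorem inf_mem_IBNC [LT α] {σ τ : Setoid α} (hσ : σ ∈ IBNC χ) (hτ : τ ∈ IBNC χ) :
    σ ⊓ τ ∈ IBNC χ :=
  ⟨hσ.1.inf hτ.1, hσ.2.inf hτ.2⟩

theorem ChiNoncrossing.rel_of_chiLE [LT α] {σ : Setoid α} (h : ChiNoncrossing χ σ)
    {a b c d : α} (hab : chiLE χ a b) (hbc : chiLE χ b c) (hcd : chiLE χ c d)
    (hac : σ a c) (hbd : σ b d) : σ a b := by
  rcases hab with rfl | hab
  · exact σ.refl a
  rcases hbc with rfl | hbc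
  · exact hac
  rcases hcd with rfl | hcd
  · exact σ.trans hac (σ.symm hbd)
  exact h a b c d hab hbc hcd hac hbd

theorem ChiNoncrossing.comap [LT α] [LT β] {χ' : β → Letter} {σ : Setoid β} {f : α → β}
    (hf : ∀ a b, chiLT χ a b → chiLE χ' (f a) (f b)) (h : ChiNoncrossing χ' σ) :
    ChiNoncrossing χ (σ.comap f) :=
  fun _ _ _ _ h₁ h₂ h₃ hs hr => h.rel_of_chiLE (hf _ _ h₁) (hf _ _ h₂) (hf _ _ h₃) hs hr

theorem ChiInterval.comap [Preorder α] [PartialOrder β] {χ' : β → Letter} {σ : Setoid β}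
    {f : α → β} (hf : Monotone f) (hχ : ∀ j, χ j = Letter.c → χ' (f j) = Letter.c)
    (h : ChiInterval χ' σ) : ChiInterval χ (σ.comap f) := by
  intro i j k hij hjk hj hik
  rw [Setoid.comap_rel] at hik ⊢
  rcases (hf hij.le).eq_or_lt with hij' | hij'
  · exact hij' ▸ σ.refl (f i)
  rcases (hf hjk.le).eq_or_lt with hjk' | hjk'
  · exact hjk' ▸ hik
  exact h _ _ _ hij' hjk' (hχ j hj) hik

end Stability

theorem isLC_or_eq_r (x : Letter) : isLC x ∨ x = Letter.r := by
  cases x <;> simp [isLC]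

theorem chiLT.eq_r_of_eq_r [LT α] {χ : α → Letter} {x y : α} (hx : χ x = Letter.r)
    (h : chiLT χ x y) : χ y = Letter.r ∧ y < x := by
  rcases h with ⟨hx', -, -⟩ | ⟨hx', -⟩ | ⟨-, hy, hyx⟩
  · rcases hx' with h | h <;> simp [h] at hx
  · rcases hx' with h | h <;> simp [h] at hx
  · exact ⟨hy, hyx⟩

theorem chiLT.isLC_left_of_le [Preorder α] {χ : α → Letter} {a b : α} (h : chiLT χ a b)
    (hab : a ≤ b) : isLC (χ a) := by
  rcases h with ⟨ha, -, -⟩ | ⟨ha, -⟩ | ⟨-, -, hba⟩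
  exacts [ha, ha, absurd hab (not_le_of_gt hba)]

theorem chiLT.eq_r_right_of_le [Preorder α] {χ : α → Letter} {a b : α} (h : chiLT χ a b)
    (hba : b ≤ a) : χ b = Letter.r := by
  rcases h with ⟨-, -, hab⟩ | ⟨-, hb⟩ | ⟨-, hb, -⟩
  exacts [absurd hba (not_le_of_gt hab), hb, hb]

section Retraction

open Set

variable [LinearOrder α] {χ : α → Letter} {l : α}

theorem chiLE_projIic (hc : χ l = Letter.c) {a b : α} (h : chiLT χ a b) :
    chiLE (restChi (Iic l) χ) (projIic l a) (projIic l b) := by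
  rcases le_total a l with ha | ha <;> rcases le_total b l with hb | hb
  · right
    rw [projIic_of_mem ha, projIic_of_mem hb]
    exact h
  · rw [projIic_of_mem ha, projIic_of_le hb]
    rcases ha.eq_or_lt with rfl | hal
    · exact Or.inl rfl
    · exact Or.inr (Or.inl ⟨h.isLC_left_of_le (ha.trans hb), Or.inr hc, hal⟩)
  · rw [projIic_of_le ha, projIic_of_mem hb]
    exact Or.inr (Or.inr (Or.inl ⟨Or.inr hc, h.eq_r_right_of_le (hb.trans ha)⟩))
  · left
    rw [projIic_of_le ha, projIic_of_le hb]

theorem chiLE_Ici_self (hc : χ l = Letter.c) (x : Ici l) :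
    chiLE (restChi (Ici l) χ) ⟨l, le_rfl⟩ x := by
  rcases x.2.eq_or_lt with hx | hx
  · exact Or.inl (Subtype.ext hx)
  rcases isLC_or_eq_r (χ x) with hx' | hx'
  · exact Or.inr (Or.inl ⟨Or.inr hc, hx', hx⟩)
  · exact Or.inr (Or.inr (Or.inl ⟨Or.inr hc, hx'⟩))

theorem chiLE_projIci (hc : χ l = Letter.c) {a b : α} (h : chiLT χ a b)
    (hb : ¬ (b < l ∧ χ b = Letter.r)) :
    chiLE (restChi (Ici l) χ) (projIci l a) (projIci l b) := by
  rcases lt_or_ge b l with hbl | hlb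
  · have hab : a < b := lt_of_not_ge fun hba => hb ⟨hbl, h.eq_r_right_of_le hba⟩
    left
    rw [projIci_of_le (hab.trans hbl).le, projIci_of_le hbl.le]
  rw [projIci_of_mem hlb]
  rcases lt_or_ge a l with hal | hla
  · rw [projIci_of_le hal.le]
    exact chiLE_Ici_self hc _
  · rw [projIci_of_mem hla]
    exact Or.inr h

theorem ChiNoncrossing.comap_projIci (hc : χ l = Letter.c) {σ : Setoid (Ici l)}
    (h : ChiNoncrossing (restChi (Ici l) χ) σ) : ChiNoncrossing χ (σ.comap (projIci l)) := by
  intro s₁ r₁ s₂ r₂ h₁ h₂ h₃ hs hr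
  rw [Setoid.comap_rel] at hs hr ⊢
  have hfinal : ∀ {x y}, chiLT χ x y → x < l ∧ χ x = Letter.r → y < l ∧ χ y = Letter.r :=
    fun hxy ⟨hxl, hx⟩ => ⟨(hxy.eq_r_of_eq_r hx).2.trans hxl, (hxy.eq_r_of_eq_r hx).1⟩
  have hl : ∀ {x}, x < l ∧ χ x = Letter.r → projIci l x = ⟨l, le_rfl⟩ :=
    fun hx => projIci_of_le hx.1.le
  by_cases hs₂ : s₂ < l ∧ χ s₂ = Letter.r
  · rw [hl hs₂] at hs
    rw [hl (hfinal h₃ hs₂)] at hr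
    exact σ.trans hs (σ.symm hr)
  have hr₁ : ¬ (r₁ < l ∧ χ r₁ = Letter.r) := fun hr₁ => hs₂ (hfinal h₂ hr₁)
  by_cases hr₂ : r₂ < l ∧ χ r₂ = Letter.r
  · rw [hl hr₂] at hr
    -- `projIci l r₂ = l` is `≺_χ`-least, so rotate `r₂` to the front of the quadruple
    have hls₁ := h.rel_of_chiLE (chiLE_Ici_self hc _) (chiLE_projIci hc h₁ hr₁)
      (chiLE_projIci hc h₂ hs₂) (σ.symm hr) hs
    exact σ.trans (σ.symm hls₁) (σ.symm hr)
  exact h.rel_of_chiLE (chiLE_projIci hc h₁ hr₁) (chiLE_projIci hc h₂ hs₂)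
    (chiLE_projIci hc h₃ hr₂) hs hr

theorem comap_projIic_mem_IBNC (hc : χ l = Letter.c) {σ : Setoid (Iic l)}
    (hσ : σ ∈ IBNC (restChi (Iic l) χ)) : σ.comap (projIic l) ∈ IBNC χ :=
  ⟨hσ.1.comap fun _ _ => chiLE_projIic hc,
    hσ.2.comap monotone_projIic fun j hj =>
      show χ (min l j) = _ by
        rcases min_choice l j with h | h <;> rw [h] <;> assumption⟩

theorem comap_projIci_mem_IBNC (hc : χ l = Letter.c) {σ : Setoid (Ici l)}
    (hσ : σ ∈ IBNC (restChi (Ici l) χ)) : σ.comap (projIci l) ∈ IBNC χ :=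
  ⟨hσ.1.comap_projIci hc,
    hσ.2.comap monotone_projIci fun j hj =>
      show χ (max l j) = _ by
        rcases max_choice l j with h | h <;> rw [h] <;> assumption⟩

variable (σ : Setoid (Iic l)) (τ : Setoid (Ici l))

theorem restrict_Iic_inf_comap :
    restrict (Iic l) (σ.comap (projIic l) ⊓ τ.comap (projIci l)) = σ := by
  refine Setoid.ext fun a b => ?_
  rw [restrict, Setoid.comap_rel]
  simp only [Setoid.inf_iff_and, Setoid.comap_rel]
  rw [projIic_coe, projIic_coe, projIci_of_le a.2, projIci_of_le b.2]
  exact and_iff_left (τ.refl _)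

theorem restrict_Ici_inf_comap :
    restrict (Ici l) (σ.comap (projIic l) ⊓ τ.comap (projIci l)) = τ := by
  refine Setoid.ext fun a b => ?_
  rw [restrict, Setoid.comap_rel]
  simp only [Setoid.inf_iff_and, Setoid.comap_rel]
  rw [projIci_coe, projIci_coe, projIic_of_le a.2, projIic_of_le b.2]
  exact and_iff_right (σ.refl _)

end Retraction

open Set in
theorem glue_iff_inf_comap {n : ℕ} {l : Fin n} (σ : Setoid (Iic l)) (τ : Setoid (Ici l))
    (x y : Fin n) :
    glue l σ τ x y ↔ (σ.comap (projIic l) ⊓ τ.comap (projIci l)) x y := by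
  simp only [Setoid.inf_iff_and, Setoid.comap_rel]
  constructor
  · rintro (⟨hx, hy, h⟩ | ⟨hx, hy, h⟩ | ⟨hx, hy, hxl, hly⟩ | ⟨hx, hy, hyl, hlx⟩)
    · rw [projIic_of_mem hx, projIic_of_mem hy, projIci_of_le hx, projIci_of_le hy]
      exact ⟨h, τ.refl _⟩
    · rw [projIic_of_le hx, projIic_of_le hy, projIci_of_mem hx, projIci_of_mem hy]
      exact ⟨σ.refl _, h⟩
    · rw [projIic_of_mem hx, projIic_of_le hy, projIci_of_le hx, projIci_of_mem hy]
      exact ⟨hxl, hly⟩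
    · rw [projIic_of_le hx, projIic_of_mem hy, projIci_of_mem hx, projIci_of_le hy]
      exact ⟨σ.symm hyl, τ.symm hlx⟩
  · rintro ⟨hσ, hτ⟩
    rcases le_total x l with (hx : x ∈ Iic l) | (hx : x ∈ Ici l) <;>
      rcases le_total y l with (hy : y ∈ Iic l) | (hy : y ∈ Ici l)
    · rw [projIic_of_mem hx, projIic_of_mem hy] at hσ
      exact Or.inl ⟨hx, hy, hσ⟩
    · rw [projIic_of_mem hx, projIic_of_le hy] at hσ
      rw [projIci_of_le hx, projIci_of_mem hy] at hτ
      exact Or.inr (Or.inr (Or.inl ⟨hx, hy, hσ, hτ⟩))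
    · rw [projIic_of_le hx, projIic_of_mem hy] at hσ
      rw [projIci_of_mem hx, projIci_of_le hy] at hτ
      exact Or.inr (Or.inr (Or.inr ⟨hx, hy, σ.symm hσ, τ.symm hτ⟩))
    · rw [projIci_of_mem hx, projIci_of_mem hy] at hτ
      exact Or.inr (Or.inl ⟨hx, hy, hτ⟩)

theorem restrict_pair_surjective_general (n : ℕ) (χ : Fin n → Letter) (l₁ : Fin n)
    (hc : χ l₁ = Letter.c)
    (π₁ : Setoid (Set.Iic l₁)) (hπ₁ : π₁ ∈ IBNC (restChi (Set.Iic l₁) χ))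
    (π' : Setoid (Set.Ici l₁)) (hπ' : π' ∈ IBNC (restChi (Set.Ici l₁) χ)) :
    ∃ π ∈ IBNC χ, (∀ x y : Fin n, π x y ↔ glue l₁ π₁ π' x y) ∧
      restrict (Set.Iic l₁) π = π₁ ∧ restrict (Set.Ici l₁) π = π' :=
  ⟨_, inf_mem_IBNC (comap_projIic_mem_IBNC hc hπ₁) (comap_projIci_mem_IBNC hc hπ'),
    fun x y => (glue_iff_inf_comap π₁ π' x y).symm,
    restrict_Iic_inf_comap π₁ π', restrict_Ici_inf_comap π₁ π'⟩

/-- Let `l₁` be the least element of `χ⁻¹(c) ∩ {2,…,n−1}`.  The map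
`α₁'(π) = (π|_{[1,l₁]}, π|_{[l₁,n]})` from `IBNC(χ)` to `IBNC(χ₁) × IBNC(χ')` is
surjective: for every `π₁ ∈ IBNC(χ₁)` and `π' ∈ IBNC(χ')`, the partition obtained by
keeping all blocks of `π₁` and `π'` not containing `l₁` and merging the blocks containing
`l₁` belongs to `IBNC(χ)` (and restricts to `π₁` and `π'`). -/
theorem restrict_pair_surjective (n : ℕ) (χ : Fin n → Letter) (l₁ : Fin n)
    (h0 : 0 < (l₁ : ℕ)) (hn : (l₁ : ℕ) + 2 ≤ n) (hc : χ l₁ = Letter.c)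
    (hmin : ∀ j : Fin n, χ j = Letter.c → 0 < (j : ℕ) → (j : ℕ) + 2 ≤ n → l₁ ≤ j)
    (π₁ : Setoid (Set.Iic l₁)) (hπ₁ : π₁ ∈ IBNC (restChi (Set.Iic l₁) χ))
    (π' : Setoid (Set.Ici l₁)) (hπ' : π' ∈ IBNC (restChi (Set.Ici l₁) χ)) :
    ∃ π ∈ IBNC χ, (∀ x y : Fin n, π x y ↔ glue l₁ π₁ π' x y) ∧
      restrict (Set.Iic l₁) π = π₁ ∧ restrict (Set.Ici l₁) π = π' :=
  restrict_pair_surjective_general n χ l₁ hc π₁ hπ₁ π' hπ'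

end FFB
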